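/- arXiv:math/0211051 — 4 statements merged into one kernel-verified Lean document; each statement's English description precedes it below -/
import Mathlib

section
/- Let H be an N×N Jacobi matrix with positive off-diagonals, and suppose the spectra of the two blocks H_- and H_+ (obtained by deleting row and column n) are disjoint. Then for each eigenvalue μ_i^- of H_-, the quantity β_i^- := −(Π_{j=1}^N (μ_i^- − λ_j)) / (Π_{l≠i}(μ_i^- − μ_l^-) · Π_{l=1}^{N-n}(μ_i^- − μ_l^+)) is strictly positive, and a_{n-1}² = Σ_{i=1}^{n-1} β_i^-, where λ_j are the eigenvalues of H and μ_l^± those of H_±. -/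
/-!
Write `χₖ` for the characteristic polynomial of the leading `k × k` block of `H`. Expanding along
the last row gives the continuant recurrence `χₖ₊₂ = (X - bₖ₊₂) χₖ₊₁ - aₖ₊₁² χₖ`; iterating it
splits `χ_H = χ_{H₋} · r - a² · q · χ_{H₊}`, where `a` is the entry coupling `H₋` to the rest,
`q` is the characteristic polynomial of `H₋` without its last row and column, and `r` that of the
block complementary to `H₋`. At an eigenvalue `μ` of `H₋` this gives `β = a² q(μ) / χ_{H₋}'(μ)`.
The Wronskian `χₖ₊₁' χₖ - χₖ₊₁ χₖ'` is positive everywhere (it equals `χₖ² + aₖ² ·` the previous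
one), so `χ_{H₋}'(μ)` and `q(μ)` have the same sign and `β > 0`. Finally `∑ q(μ) / χ_{H₋}'(μ)` is
the leading coefficient of the monic `q` by Lagrange interpolation, that is `1`.
-/

open Matrix Polynomial BigOperators

/-- A Jacobi matrix: real symmetric tridiagonal with positive off-diagonal entries. -/
def IsJacobi {N : ℕ} (H : Matrix (Fin N) (Fin N) ℝ) : Prop :=
  H.IsSymm ∧ (∀ i j : Fin N, (i : ℕ) + 1 < (j : ℕ) → H i j = 0) ∧
    (∀ i j : Fin N, (j : ℕ) = (i : ℕ) + 1 → 0 < H i j)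

/-- The principal block of `H` on indices `0, …, n-1` (paper: `H₋`). -/
def Jminus {N : ℕ} (H : Matrix (Fin N) (Fin N) ℝ) (n : Fin N) :
    Matrix (Fin (n : ℕ)) (Fin (n : ℕ)) ℝ :=
  H.submatrix (fun i => ⟨i, i.isLt.trans n.isLt⟩) (fun i => ⟨i, i.isLt.trans n.isLt⟩)

/-- The principal block of `H` on indices `n+1, …, N-1` (paper: `H₊`). -/
def Jplus {N : ℕ} (H : Matrix (Fin N) (Fin N) ℝ) (n : Fin N) :
    Matrix (Fin (N - (n : ℕ) - 1)) (Fin (N - (n : ℕ) - 1)) ℝ :=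
  H.submatrix (fun i => ⟨(n : ℕ) + 1 + i, by have := i.isLt; omega⟩)
    (fun i => ⟨(n : ℕ) + 1 + i, by have := i.isLt; omega⟩)

/-- `H` with the `n`-th row and column deleted. -/
def Jdel {N : ℕ} (H : Matrix (Fin N) (Fin N) ℝ) (n : Fin N) :
    Matrix (Fin (N - 1)) (Fin (N - 1)) ℝ :=
  H.submatrix
    (fun i => if h : (i : ℕ) < (n : ℕ) then ⟨i, h.trans n.isLt⟩
      else ⟨(i : ℕ) + 1, by have := i.isLt; omega⟩)
    (fun i => if h : (i : ℕ) < (n : ℕ) then ⟨i, h.trans n.isLt⟩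
      else ⟨(i : ℕ) + 1, by have := i.isLt; omega⟩)


theorem Matrix.det_eq_mul_det_of_last_row {R : Type*} [CommRing R] {k : ℕ}
    (M : Matrix (Fin (k + 1)) (Fin (k + 1)) R)
    (h : ∀ j : Fin k, M (Fin.last k) j.castSucc = 0) :
    M.det = M (Fin.last k) (Fin.last k) * (M.submatrix Fin.castSucc Fin.castSucc).det := by
  rw [det_succ_row M (Fin.last k), Fin.sum_univ_castSucc]
  simp [h, Fin.succAbove_last]

theorem Matrix.det_eq_mul_det_of_last_col {R : Type*} [CommRing R] {k : ℕ}
    (M : Matrix (Fin (k + 1)) (Fin (k + 1)) R)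
    (h : ∀ i : Fin k, M i.castSucc (Fin.last k) = 0) :
    M.det = M (Fin.last k) (Fin.last k) * (M.submatrix Fin.castSucc Fin.castSucc).det := by
  rw [← det_transpose, det_eq_mul_det_of_last_row _ h, ← det_transpose]
  rfl

theorem Polynomial.eval_derivative_prod_X_sub_C {R ι : Type*} [CommRing R] [Fintype ι] [DecidableEq ι]
    (v : ι → R) (i : ι) :
    eval (v i) (derivative (∏ k, (X - C (v k)))) = ∏ l ∈ Finset.univ.erase i, (v i - v l) := by
  rw [← Lagrange.nodal_eq, Lagrange.eval_nodal_derivative_eval_node_eq (Finset.mem_univ i),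
    Lagrange.eval_nodal]

theorem Polynomial.Monic.sum_eval_div_prod_erase_eq_one {F ι : Type*} [Field F] [Fintype ι]
    [DecidableEq ι] {v : ι → F} (hv : Function.Injective v) {q : F[X]} (hq : q.Monic)
    (hdeg : q.natDegree + 1 = Fintype.card ι) :
    ∑ i, eval (v i) q / ∏ l ∈ Finset.univ.erase i, (v i - v l) = 1 := by
  rw [← Lagrange.leadingCoeff_eq_sum hv.injOn, hq.leadingCoeff]
  rw [Finset.card_univ, ← hdeg, degree_eq_natDegree hq.ne_zero]
  norm_cast

theorem Polynomial.neg_eval_div_eq_of_eq_mul_sub {F : Type*} [Field F] {P Q R S T : F[X]}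
    {c μ : F} (h : P = Q * R - C c * S * T) (hQ : Q.IsRoot μ) (hT : T.eval μ ≠ 0) (d : F) :
    -P.eval μ / (d * T.eval μ) = c * (S.eval μ / d) := by
  rw [h, eval_sub, eval_mul, eval_mul, eval_mul, eval_C, hQ.eq_zero, zero_mul, zero_sub, neg_neg,
    mul_comm d, ← div_div, mul_div_cancel_right₀ _ hT, mul_div_assoc]

/- Blocks are cut out of functions `ℕ → ℕ → α` rather than out of matrices, so that offsets and
sizes need no bound proofs; `extendByZero` turns a matrix into such a function. -/
def principalBlock {α : Type*} (B : ℕ → ℕ → α) (s k : ℕ) : Matrix (Fin k) (Fin k) α :=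
  Matrix.of fun i j => B (s + i) (s + j)

def IsTridiagonal {α : Type*} [Zero α] (B : ℕ → ℕ → α) : Prop :=
  ∀ i j, i + 1 < j → B i j = 0 ∧ B j i = 0

noncomputable def charmatrixFun {R : Type*} [CommRing R] (A : ℕ → ℕ → R) : ℕ → ℕ → R[X] :=
  fun i j => (if i = j then X else 0) - C (A i j)

theorem principalBlock_submatrix_castSucc {α : Type*} (B : ℕ → ℕ → α) (s k : ℕ) :
    (principalBlock B s (k + 1)).submatrix Fin.castSucc Fin.castSucc = principalBlock B s k :=
  rfl

section Continuant

variable {R : Type*} [CommRing R] {B : ℕ → ℕ → R}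

theorem det_principalBlock_zero (B : ℕ → ℕ → R) (s : ℕ) : (principalBlock B s 0).det = 1 :=
  det_isEmpty

theorem det_principalBlock_one (B : ℕ → ℕ → R) (s : ℕ) :
    (principalBlock B s 1).det = B s s := by
  simp [principalBlock]

/- The absolute index `j` is a parameter so that instances at different offsets produce
syntactically equal coefficients. -/
theorem det_principalBlock_add_two (hB : IsTridiagonal B) {s k j : ℕ} (hj : s + k = j) :
    (principalBlock B s (k + 2)).det =
      B (j + 1) (j + 1) * (principalBlock B s (k + 1)).det -
        B j (j + 1) * B (j + 1) j * (principalBlock B s k).det := by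
  subst hj
  have hcorner : ((principalBlock B s (k + 2)).submatrix Fin.castSucc
      (Fin.last k).castSucc.succAbove).det =
        B (s + k) (s + k + 1) * (principalBlock B s k).det := by
    rw [det_eq_mul_det_of_last_col]
    · congr 1
      · simp [principalBlock, add_assoc]
      congr 1
      ext i j
      simp [principalBlock, Fin.succAbove_of_castSucc_lt, Fin.castSucc_lt_castSucc_iff]
    · intro i
      exact (hB _ _ (by simp; omega)).1
  rw [det_succ_row _ (Fin.last (k + 1)), Fin.sum_univ_castSucc, Fin.sum_univ_castSucc,
    Finset.sum_eq_zero fun j _ => ?_]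
  · simp only [Fin.val_last, Fin.val_castSucc, odd_add_one_self, Odd.neg_one_pow, Even.add_self,
      Even.neg_pow, one_pow, neg_mul, one_mul, zero_add, Fin.succAbove_last, hcorner,
      principalBlock_submatrix_castSucc]
    simp only [principalBlock, of_apply, Fin.val_last, Fin.val_castSucc, ← add_assoc]
    ring
  · have hzero : B (s + (k + 1)) (s + j) = 0 := (hB _ _ (by omega)).2
    simp [principalBlock, hzero]

theorem det_principalBlock_split (hB : IsTridiagonal B) (s m r : ℕ) :
    (principalBlock B s (m + r + 2)).det =
      (principalBlock B s (m + 1)).det * (principalBlock B (s + m + 1) (r + 1)).det -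
        B (s + m) (s + m + 1) * B (s + m + 1) (s + m) *
          (principalBlock B s m).det * (principalBlock B (s + m + 2) r).det := by
  induction r using Nat.twoStepInduction with
  | zero =>
    rw [add_zero, det_principalBlock_add_two hB rfl, det_principalBlock_one,
      det_principalBlock_zero]
    ring
  | one =>
    rw [det_principalBlock_add_two hB (k := m + 1) (j := s + m + 1) (by omega),
      det_principalBlock_add_two hB (k := m) (j := s + m) rfl,
      det_principalBlock_add_two hB (k := 0) (j := s + m + 1) rfl, det_principalBlock_one,
      det_principalBlock_one, det_principalBlock_zero]
    ring
  | more r ih₀ ih₁ =>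
    have e₂ := det_principalBlock_add_two hB (s := s) (k := m + r + 2) (j := s + m + r + 2)
      (by omega)
    have e₃ := det_principalBlock_add_two hB (s := s + m + 1) (k := r + 1) (j := s + m + r + 2)
      (by omega)
    have e₄ := det_principalBlock_add_two hB (s := s + m + 2) (k := r) (j := s + m + r + 2)
      (by omega)
    linear_combination e₂ + B (s + m + r + 2 + 1) (s + m + r + 2 + 1) * ih₁
      - B (s + m + r + 2) (s + m + r + 2 + 1) * B (s + m + r + 2 + 1) (s + m + r + 2) * ih₀
      - (principalBlock B s (m + 1)).det * e₃
      + B (s + m) (s + m + 1) * B (s + m + 1) (s + m) * (principalBlock B s m).det * e₄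

end Continuant

section Charpoly

variable {R : Type*} [CommRing R] {A : ℕ → ℕ → R}

theorem IsTridiagonal.charmatrixFun (hA : IsTridiagonal A) :
    IsTridiagonal (charmatrixFun A) := by
  intro i j hij
  have hne : i ≠ j := by omega
  simp [_root_.charmatrixFun, hA i j hij, hne, hne.symm]

theorem charmatrix_principalBlock (A : ℕ → ℕ → R) (s k : ℕ) :
    charmatrix (principalBlock A s k) = principalBlock (charmatrixFun A) s k := by
  ext i j
  simp [charmatrix_apply, principalBlock, charmatrixFun, diagonal_apply, Fin.ext_iff]

theorem charpoly_principalBlock_add_two (hA : IsTridiagonal A) (s k : ℕ) :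
    (principalBlock A s (k + 2)).charpoly =
      (X - C (A (s + k + 1) (s + k + 1))) * (principalBlock A s (k + 1)).charpoly -
        C (A (s + k) (s + k + 1) * A (s + k + 1) (s + k)) * (principalBlock A s k).charpoly := by
  simp only [charpoly, charmatrix_principalBlock]
  rw [det_principalBlock_add_two hA.charmatrixFun rfl]
  simp [charmatrixFun]

theorem charpoly_principalBlock_split (hA : IsTridiagonal A) (s : ℕ) {n N : ℕ} (hn : 0 < n)
    (hnN : n < N) :
    (principalBlock A s N).charpoly =
      (principalBlock A s n).charpoly * (principalBlock A (s + n) (N - n)).charpoly -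
        C (A (s + n - 1) (s + n) * A (s + n) (s + n - 1)) *
          (principalBlock A s (n - 1)).charpoly *
            (principalBlock A (s + n + 1) (N - n - 1)).charpoly := by
  obtain ⟨m, rfl⟩ : ∃ m, n = m + 1 := ⟨n - 1, by omega⟩
  obtain ⟨r, rfl⟩ : ∃ r, N = m + r + 2 := ⟨N - m - 2, by omega⟩
  simp only [charpoly, charmatrix_principalBlock]
  rw [show m + r + 2 - (m + 1) = r + 1 by omega, show r + 1 - 1 = r by omega,
    Nat.add_sub_cancel, det_principalBlock_split hA.charmatrixFun]
  simp [charmatrixFun, ← add_assoc]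

end Charpoly

theorem wronskian_charpoly_principalBlock_pos {A : ℕ → ℕ → ℝ} (hA : IsTridiagonal A)
    (s k : ℕ) (hpos : ∀ i < k, 0 < A (s + i) (s + i + 1) * A (s + i + 1) (s + i)) (x : ℝ) :
    0 < eval x (derivative (principalBlock A s (k + 1)).charpoly *
        (principalBlock A s k).charpoly -
      (principalBlock A s (k + 1)).charpoly * derivative (principalBlock A s k).charpoly) := by
  induction k with
  | zero =>
    rw [charpoly, charpoly, charmatrix_principalBlock, charmatrix_principalBlock,
      det_principalBlock_one, det_principalBlock_zero]
    simp [charmatrixFun]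
  | succ k ih =>
    set P₀ := (principalBlock A s k).charpoly
    set P₁ := (principalBlock A s (k + 1)).charpoly
    set c := A (s + k) (s + k + 1) * A (s + k + 1) (s + k)
    have hstep : derivative (principalBlock A s (k + 1 + 1)).charpoly * P₁ -
        (principalBlock A s (k + 1 + 1)).charpoly * derivative P₁ =
          P₁ * P₁ + C c * (derivative P₁ * P₀ - P₁ * derivative P₀) := by
      rw [charpoly_principalBlock_add_two hA]
      simp only [derivative_sub, derivative_mul, derivative_X, derivative_C]
      ring
    rw [hstep, eval_add, eval_mul, eval_mul, eval_C]
    have hW := ih fun i hi => hpos i (by omega)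
    have hc : 0 < c := hpos k (by omega)
    nlinarith [mul_self_nonneg (eval x P₁)]

theorem eval_derivative_mul_eval_charpoly_pos {A : ℕ → ℕ → ℝ} (hA : IsTridiagonal A) {s n : ℕ}
    (hn : 0 < n) (hpos : ∀ i, i + 1 < n → 0 < A (s + i) (s + i + 1) * A (s + i + 1) (s + i))
    {μ : ℝ} (hμ : (principalBlock A s n).charpoly.IsRoot μ) :
    0 < eval μ (derivative (principalBlock A s n).charpoly) *
      eval μ (principalBlock A s (n - 1)).charpoly := by
  obtain ⟨k, rfl⟩ : ∃ k, n = k + 1 := ⟨n - 1, by omega⟩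
  have h := wronskian_charpoly_principalBlock_pos hA s k (fun i hi => hpos i (by omega)) μ
  rw [eval_sub, eval_mul, eval_mul, hμ.eq_zero, zero_mul, sub_zero] at h
  rwa [Nat.add_sub_cancel]

section Jacobi

variable {N : ℕ}

def extendByZero {α : Type*} [Zero α] (H : Matrix (Fin N) (Fin N) α) : ℕ → ℕ → α :=
  fun i j => if h : i < N ∧ j < N then H ⟨i, h.1⟩ ⟨j, h.2⟩ else 0

theorem extendByZero_of_lt {α : Type*} [Zero α] (H : Matrix (Fin N) (Fin N) α) {i j : ℕ}
    (hi : i < N) (hj : j < N) : extendByZero H i j = H ⟨i, hi⟩ ⟨j, hj⟩ :=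
  dif_pos ⟨hi, hj⟩

theorem principalBlock_extendByZero_zero {α : Type*} [Zero α] (H : Matrix (Fin N) (Fin N) α) :
    principalBlock (extendByZero H) 0 N = H := by
  ext i j
  simp [principalBlock, extendByZero_of_lt H i.isLt j.isLt]

theorem Jminus_eq_principalBlock (H : Matrix (Fin N) (Fin N) ℝ) (n : Fin N) :
    Jminus H n = principalBlock (extendByZero H) 0 n := by
  ext i j
  have := n.isLt
  simp [Jminus, principalBlock, extendByZero_of_lt H (i.isLt.trans this) (j.isLt.trans this)]

theorem Jplus_eq_principalBlock (H : Matrix (Fin N) (Fin N) ℝ) (n : Fin N) :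
    Jplus H n = principalBlock (extendByZero H) (n + 1) (N - n - 1) := by
  ext i j
  have := i.isLt
  have := j.isLt
  simp [Jplus, principalBlock,
    extendByZero_of_lt H (i := n + 1 + i) (j := n + 1 + j) (by omega) (by omega)]

variable {H : Matrix (Fin N) (Fin N) ℝ}

theorem IsJacobi.isTridiagonal (hH : IsJacobi H) : IsTridiagonal (extendByZero H) := by
  intro i j hij
  by_cases hj : j < N
  · rw [extendByZero_of_lt H (by omega) hj, extendByZero_of_lt H hj (by omega),
      hH.1.apply ⟨i, by omega⟩ ⟨j, hj⟩]
    exact ⟨hH.2.1 _ _ hij, hH.2.1 _ _ hij⟩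
  · simp [extendByZero, hj]

theorem IsJacobi.extendByZero_mul_pos (hH : IsJacobi H) {i : ℕ} (hi : i + 1 < N) :
    0 < extendByZero H i (i + 1) * extendByZero H (i + 1) i := by
  rw [extendByZero_of_lt H (by omega) hi, extendByZero_of_lt H hi (by omega),
    hH.1.apply ⟨i, by omega⟩ ⟨i + 1, hi⟩]
  exact mul_pos (hH.2.2 _ _ rfl) (hH.2.2 _ _ rfl)

theorem IsJacobi.charpoly_split (hH : IsJacobi H) {n : Fin N} (h0 : 0 < (n : ℕ)) :
    H.charpoly =
      (Jminus H n).charpoly * (principalBlock (extendByZero H) n (N - n)).charpoly -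
        C (H ⟨n - 1, by omega⟩ n ^ 2) * (principalBlock (extendByZero H) 0 (n - 1)).charpoly *
          (Jplus H n).charpoly := by
  have hsplit := charpoly_principalBlock_split hH.isTridiagonal 0 h0 n.isLt
  simp only [zero_add] at hsplit
  rwa [← Jminus_eq_principalBlock, ← Jplus_eq_principalBlock, principalBlock_extendByZero_zero,
    extendByZero_of_lt H (by omega) n.isLt, extendByZero_of_lt H n.isLt (by omega),
    hH.1.apply ⟨n - 1, by omega⟩, ← sq] at hsplit

theorem IsJacobi.eval_derivative_mul_eval_pos (hH : IsJacobi H) {n : Fin N}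
    (h0 : 0 < (n : ℕ)) {μ : ℝ} (hμ : (Jminus H n).charpoly.IsRoot μ) :
    0 < eval μ (derivative (Jminus H n).charpoly) *
      eval μ (principalBlock (extendByZero H) 0 (n - 1)).charpoly := by
  rw [Jminus_eq_principalBlock] at hμ ⊢
  exact eval_derivative_mul_eval_charpoly_pos hH.isTridiagonal h0
    (fun i hi => by simpa using hH.extendByZero_mul_pos (i := i) (by omega)) hμ

end Jacobi

/-- When σ(H₋) ∩ σ(H₊) = ∅, the residues
βᵢ⁻ = −∏ⱼ(μᵢ⁻ − λⱼ) / (∏_{l≠i}(μᵢ⁻ − μₗ⁻)·∏ₗ(μᵢ⁻ − μₗ⁺)) are positive and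
aₙ₋₁² = Σᵢ βᵢ⁻. -/
theorem jacobi_beta_minus {N : ℕ} (H : Matrix (Fin N) (Fin N) ℝ) (n : Fin N)
    (hH : IsJacobi H) (h0 : 0 < (n : ℕ))
    (lam : Fin N → ℝ) (mum : Fin (n : ℕ) → ℝ) (mup : Fin (N - (n : ℕ) - 1) → ℝ)
    (hcl : H.charpoly = ∏ j, (X - C (lam j)))
    (hcm : (Jminus H n).charpoly = ∏ k, (X - C (mum k)))
    (hcp : (Jplus H n).charpoly = ∏ l, (X - C (mup l)))
    (hsm : Function.Injective mum)
    (hdisj : ∀ k l, mum k ≠ mup l) :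
    (∀ i, 0 < -(∏ j, (mum i - lam j)) /
        ((∏ l ∈ Finset.univ.erase i, (mum i - mum l)) *
          ∏ l, (mum i - mup l))) ∧
    (H ⟨(n : ℕ) - 1, by have := n.isLt; omega⟩ n) ^ 2 =
      ∑ i, -(∏ j, (mum i - lam j)) /
        ((∏ l ∈ Finset.univ.erase i, (mum i - mum l)) *
          ∏ l, (mum i - mup l)) := by
  set a := H ⟨(n : ℕ) - 1, by omega⟩ n
  set q := (principalBlock (extendByZero H) 0 (n - 1)).charpoly with hq
  have hsplit := hH.charpoly_split h0
  rw [hcl, hcm, hcp] at hsplit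
  have hroot : ∀ i, (∏ k, (X - C (mum k))).IsRoot (mum i) := fun i => by
    rw [← Lagrange.nodal_eq]
    exact Lagrange.eval_nodal_at_node (Finset.mem_univ i)
  have hβ : ∀ i, -(∏ j, (mum i - lam j)) /
      ((∏ l ∈ Finset.univ.erase i, (mum i - mum l)) * ∏ l, (mum i - mup l)) =
        a ^ 2 * (eval (mum i) q / ∏ l ∈ Finset.univ.erase i, (mum i - mum l)) := fun i => by
    have hχp : eval (mum i) (∏ l, (X - C (mup l))) ≠ 0 := by
      simpa [eval_prod, Finset.prod_ne_zero_iff, sub_ne_zero] using hdisj i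
    simpa [eval_prod] using neg_eval_div_eq_of_eq_mul_sub hsplit (hroot i) hχp _
  have hratio : ∀ i, 0 < eval (mum i) q / ∏ l ∈ Finset.univ.erase i, (mum i - mum l) := fun i => by
    have h := hH.eval_derivative_mul_eval_pos h0 (hcm ▸ hroot i)
    rw [hcm, eval_derivative_prod_X_sub_C, mul_comm] at h
    exact div_pos_iff.2 (mul_pos_iff.1 h)
  have hsum := (charpoly_monic _).sum_eval_div_prod_erase_eq_one hsm (q := q) (by
    rw [hq, charpoly_natDegree_eq_dim, Fintype.card_fin, Fintype.card_fin]
    omega)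
  refine ⟨fun i => ?_, ?_⟩
  · rw [hβ]
    exact mul_pos (pow_pos (hH.2.2 _ _ (by simp; omega)) 2) (hratio i)
  · simp_rw [hβ, ← Finset.mul_sum, hsum, mul_one]
end

section
/- There exist two distinct Jacobi matrices H ≠ H' (with positive off-diagonal entries) and an index n such that σ(H) = σ(H'), σ(H_-) = σ(H'_-), and σ(H_+) = σ(H'_+), where H_± and H'_± are obtained by deleting the n-th row and column. (In any such example H_- and H_+ necessarily share an eigenvalue.) -/
open Matrix Polynomial BigOperators

/-- Non-uniqueness when the submatrix spectra overlap: there exist two distinct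
Jacobi matrices with the same three spectra. -/
theorem three_spectra_nonuniqueness :
    ∃ (N : ℕ) (n : Fin N) (H H' : Matrix (Fin N) (Fin N) ℝ),
      IsJacobi H ∧ IsJacobi H' ∧ H ≠ H' ∧
      spectrum ℝ H = spectrum ℝ H' ∧
      spectrum ℝ (Jminus H n) = spectrum ℝ (Jminus H' n) ∧
      spectrum ℝ (Jplus H n) = spectrum ℝ (Jplus H' n) := by
  refine ⟨3, 1, !![0,1,0;1,0,2;0,2,0], !![0,2,0;2,0,1;0,1,0], ?_, ?_, ?_, ?_, ?_, ?_⟩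
  · refine ⟨?_, ?_, ?_⟩
    · ext i j; fin_cases i <;> fin_cases j <;> simp [Matrix.transpose]
    · intro i j h; fin_cases i <;> fin_cases j <;> simp_all <;> omega
    · intro i j h; fin_cases i <;> fin_cases j <;> simp_all <;> norm_num
  · refine ⟨?_, ?_, ?_⟩
    · ext i j; fin_cases i <;> fin_cases j <;> simp [Matrix.transpose]
    · intro i j h; fin_cases i <;> fin_cases j <;> simp_all <;> omega
    · intro i j h; fin_cases i <;> fin_cases j <;> simp_all <;> norm_num
  · intro h
    have := congrFun (congrFun h 0) 1
    norm_num at this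
  · have key : (!![0,2,0;2,0,1;0,1,0] : Matrix (Fin 3) (Fin 3) ℝ) =
        Matrix.reindexAlgEquiv ℝ ℝ (Fin.revPerm) !![0,1,0;1,0,2;0,2,0] := by
      ext i j
      fin_cases i <;> fin_cases j <;>
        simp [Matrix.reindexAlgEquiv_apply, Matrix.reindex_apply, Fin.rev]
    rw [key]
    exact (AlgEquiv.spectrum_eq (Matrix.reindexAlgEquiv ℝ ℝ Fin.revPerm) _).symm
  · have h : Jminus (!![0,1,0;1,0,2;0,2,0] : Matrix (Fin 3) (Fin 3) ℝ) 1 =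
        Jminus (!![0,2,0;2,0,1;0,1,0] : Matrix (Fin 3) (Fin 3) ℝ) 1 := by
      ext i j
      fin_cases i <;> fin_cases j <;> simp [Jminus]
    rw [h]
  · have h : Jplus (!![0,1,0;1,0,2;0,2,0] : Matrix (Fin 3) (Fin 3) ℝ) 1 =
        Jplus (!![0,2,0;2,0,1;0,1,0] : Matrix (Fin 3) (Fin 3) ℝ) 1 := by
      ext i j
      fin_cases i <;> fin_cases j <;> simp [Jplus]
    rw [h]
end

section
/- Let H be an N×N Jacobi matrix with positive off-diagonals and n an index with σ(H_-) ∩ σ(H_+) = ∅. Then every eigenvalue μ of H_- (and of H_+) is NOT an eigenvalue of H; equivalently, the polynomials det(z − H) and det(z − H_-)det(z − H_+) have no common roots. -/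
open Matrix Polynomial BigOperators

/-! ### Auxiliary lemmas -/

lemma jac_mulVec_apply {p q : ℕ} (M : Matrix (Fin p) (Fin q) ℝ) (x : Fin q → ℝ) (i : Fin p) :
    M.mulVec x i = ∑ j, M i j * x j := rfl

lemma jac_algmap_mulVec {m : ℕ} (μ : ℝ) (v : Fin m → ℝ) :
    (algebraMap ℝ (Matrix (Fin m) (Fin m) ℝ)) μ *ᵥ v = μ • v := by
  simp [Matrix.algebraMap_eq_diagonal]
  funext i
  simp [Matrix.mulVec_diagonal]

lemma jac_mem_spectrum_iff {m : ℕ} (M : Matrix (Fin m) (Fin m) ℝ) (μ : ℝ) :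
    μ ∈ spectrum ℝ M ↔ ∃ v, v ≠ 0 ∧ M.mulVec v = μ • v := by
  rw [spectrum.mem_iff]
  rw [Matrix.isUnit_iff_isUnit_det, isUnit_iff_ne_zero, not_not,
    ← Matrix.exists_mulVec_eq_zero_iff]
  constructor
  · rintro ⟨v, hv, hv2⟩
    refine ⟨v, hv, ?_⟩
    have h0 : (algebraMap ℝ (Matrix (Fin m) (Fin m) ℝ)) μ *ᵥ v - M *ᵥ v = 0 := by
      rw [← Matrix.sub_mulVec]; exact hv2
    rw [jac_algmap_mulVec] at h0
    exact (sub_eq_zero.mp h0).symm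
  · rintro ⟨v, hv, hv2⟩
    refine ⟨v, hv, ?_⟩
    rw [Matrix.sub_mulVec, jac_algmap_mulVec, hv2, sub_self]

lemma jac_sum_fin_lt {N : ℕ} (m : ℕ) (hm : m ≤ N) (f : Fin N → ℝ)
    (hf : ∀ j : Fin N, m ≤ (j : ℕ) → f j = 0) :
    ∑ j, f j = ∑ j : Fin m, f ⟨j, lt_of_lt_of_le j.isLt hm⟩ := by
  set g : ℕ → ℝ := fun k => if h : k < N then f ⟨k, h⟩ else 0 with hg
  have h1 : ∑ j : Fin N, f j = ∑ k ∈ Finset.range N, g k := by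
    rw [← Fin.sum_univ_eq_sum_range g N]
    exact Finset.sum_congr rfl fun j _ => by simp [hg]
  have h2 : ∑ j : Fin m, f ⟨j, lt_of_lt_of_le j.isLt hm⟩ = ∑ k ∈ Finset.range m, g k := by
    rw [← Fin.sum_univ_eq_sum_range g m]
    refine Finset.sum_congr rfl fun j _ => by
      have : (j : ℕ) < N := lt_of_lt_of_le j.isLt hm
      simp [hg, this]
  rw [h1, h2]
  refine (Finset.sum_subset (Finset.range_subset_range.2 hm) ?_).symm
  intro k hk hk2
  simp only [Finset.mem_range] at hk hk2
  simp only [hg, dif_pos hk]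
  exact hf ⟨k, hk⟩ (le_of_not_gt hk2)

lemma jac_sum_fin_ge {N : ℕ} (m : ℕ) (hm : m ≤ N) (f : Fin N → ℝ)
    (hf : ∀ j : Fin N, (j : ℕ) < m → f j = 0) :
    ∑ j, f j = ∑ j : Fin (N - m), f ⟨m + j, by have := j.isLt; omega⟩ := by
  set g : ℕ → ℝ := fun k => if h : k < N then f ⟨k, h⟩ else 0 with hg
  have h1 : ∑ j : Fin N, f j = ∑ k ∈ Finset.range N, g k := by
    rw [← Fin.sum_univ_eq_sum_range g N]
    exact Finset.sum_congr rfl fun j _ => by simp [hg]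
  have h2 : ∑ j : Fin (N - m), f ⟨m + j, by have := j.isLt; omega⟩
      = ∑ k ∈ Finset.range (N - m), g (m + k) := by
    rw [← Fin.sum_univ_eq_sum_range (fun k => g (m + k)) (N - m)]
    refine Finset.sum_congr rfl fun j _ => by
      have : m + (j : ℕ) < N := by have := j.isLt; omega
      simp [hg, this]
  rw [h1, h2, ← Finset.sum_Ico_eq_sum_range, Finset.range_eq_Ico,
    ← Finset.sum_Ico_consecutive g (Nat.zero_le m) hm]
  have h3 : ∑ k ∈ Finset.Ico 0 m, g k = 0 := by
    refine Finset.sum_eq_zero fun k hk => ?_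
    simp only [Finset.mem_Ico] at hk
    have hkN : k < N := lt_of_lt_of_le hk.2 hm
    simp only [hg, dif_pos hkN]
    exact hf ⟨k, hkN⟩ hk.2
  rw [h3, zero_add]

/-- An eigenvector of a symmetric tridiagonal matrix with positive off-diagonal whose
first component vanishes is zero. -/
lemma jac_tri_zero_of_first {m : ℕ} (J : Matrix (Fin m) (Fin m) ℝ)
    (hsymm : ∀ i j, J j i = J i j)
    (hband : ∀ i j : Fin m, (i : ℕ) + 1 < (j : ℕ) → J i j = 0)
    (hpos : ∀ i j : Fin m, (j : ℕ) = (i : ℕ) + 1 → 0 < J i j)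
    (μ : ℝ) (v : Fin m → ℝ) (hv : J.mulVec v = μ • v)
    (h0 : 0 < m) (hfirst : v ⟨0, h0⟩ = 0) : v = 0 := by
  have claim : ∀ k : ℕ, ∀ i : Fin m, (i : ℕ) ≤ k → v i = 0 := by
    intro k
    induction k with
    | zero =>
      intro i hi
      have : i = ⟨0, h0⟩ := by apply Fin.ext; simp; omega
      rw [this]; exact hfirst
    | succ k ih =>
      intro i hi
      by_cases hik : (i : ℕ) ≤ k
      · exact ih i hik
      have hival : (i : ℕ) = k + 1 := by omega
      have hkm : k < m := by have := i.isLt; omega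
      set p : Fin m := ⟨k, hkm⟩ with hp
      have hrow : (J.mulVec v) p = 0 := by
        rw [hv]; simp only [Pi.smul_apply, smul_eq_mul]
        rw [ih p (le_refl k), mul_zero]
      have hsum : ∑ j, J p j * v j = 0 := hrow
      have hone : ∑ j, J p j * v j = J p i * v i := by
        refine Finset.sum_eq_single i ?_ ?_
        · intro j _ hji
          by_cases hjk : (j : ℕ) ≤ k
          · rw [ih j hjk, mul_zero]
          · have hjgt : (j : ℕ) > k + 1 := by
              rcases Nat.lt_or_ge (k+1) (j : ℕ) with h | h
              · exact h
              · exfalso; exact hji (Fin.ext (by omega))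
            rw [hband p j (by simp [hp]; omega), zero_mul]
        · intro h; exact absurd (Finset.mem_univ i) h
      have hJpi : 0 < J p i := hpos p i (by simp [hp, hival])
      have := hone ▸ hsum
      rcases mul_eq_zero.mp this with h | h
      · exact absurd h (ne_of_gt hJpi)
      · exact h
  funext i
  exact claim m i (le_of_lt i.isLt)

/-- An eigenvector of a symmetric tridiagonal matrix with positive off-diagonal whose
last component vanishes is zero. -/
lemma jac_tri_zero_of_last {m : ℕ} (J : Matrix (Fin m) (Fin m) ℝ)
    (hsymm : ∀ i j, J j i = J i j)
    (hband : ∀ i j : Fin m, (i : ℕ) + 1 < (j : ℕ) → J i j = 0)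
    (hpos : ∀ i j : Fin m, (j : ℕ) = (i : ℕ) + 1 → 0 < J i j)
    (μ : ℝ) (v : Fin m → ℝ) (hv : J.mulVec v = μ • v)
    (h0 : 0 < m) (hlast : v ⟨m - 1, by omega⟩ = 0) : v = 0 := by
  have claim : ∀ k : ℕ, ∀ i : Fin m, m - 1 - (i : ℕ) ≤ k → v i = 0 := by
    intro k
    induction k with
    | zero =>
      intro i hi
      have : i = ⟨m - 1, by omega⟩ := by apply Fin.ext; simp; have := i.isLt; omega
      rw [this]; exact hlast
    | succ k ih =>
      intro i hi
      by_cases hik : m - 1 - (i : ℕ) ≤ k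
      · exact ih i hik
      have hival : m - 1 - (i : ℕ) = k + 1 := by omega
      have him : (i : ℕ) + 1 < m := by have := i.isLt; omega
      set p : Fin m := ⟨(i : ℕ) + 1, him⟩ with hp
      have hvp : v p = 0 := ih p (by simp [hp]; omega)
      have hrow : (J.mulVec v) p = 0 := by
        rw [hv]; simp only [Pi.smul_apply, smul_eq_mul]
        rw [hvp, mul_zero]
      have hsum : ∑ j, J p j * v j = 0 := hrow
      have hone : ∑ j, J p j * v j = J p i * v i := by
        refine Finset.sum_eq_single i ?_ ?_
        · intro j _ hji
          by_cases hjk : (i : ℕ) < (j : ℕ)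
          · rw [ih j (by omega), mul_zero]
          · have hjlt : (j : ℕ) < (i : ℕ) := by
              rcases Nat.lt_or_ge (j : ℕ) (i : ℕ) with h | h
              · exact h
              · exfalso; exact hji (Fin.ext (by omega))
            rw [hsymm j p, hband j p (by simp [hp]; omega), zero_mul]
        · intro h; exact absurd (Finset.mem_univ i) h
      have hJpi : 0 < J p i := by
        rw [hsymm i p]
        exact hpos i p (by simp [hp])
      have := hone ▸ hsum
      rcases mul_eq_zero.mp this with h | h
      · exact absurd h (ne_of_gt hJpi)
      · exact h
  funext i
  exact claim m i (by omega)

/-- The key symmetry/dot-product trick: if `H *ᵥ wext` equals `μ • wext` plus a defect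
`c` concentrated at index `n`, and `v` is a `μ`-eigenvector of symmetric `H`, then
`c ≠ 0` forces `v n = 0`. -/
lemma jac_dot_trick {N : ℕ} (H : Matrix (Fin N) (Fin N) ℝ) (hsymmIs : H.IsSymm) (n : Fin N)
    (μ c : ℝ) (v wext : Fin N → ℝ) (hvEq : H.mulVec v = μ • v)
    (hkey : ∀ i, (H.mulVec wext) i = μ * wext i + (if i = n then c else 0)) (hc : c ≠ 0) :
    v n = 0 := by
  have hdot1 : (H.mulVec wext) ⬝ᵥ v = μ * (wext ⬝ᵥ v) := by
    calc (H *ᵥ wext) ⬝ᵥ v = (Hᵀ *ᵥ wext) ⬝ᵥ v := by rw [hsymmIs]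
      _ = (wext ᵥ* H) ⬝ᵥ v := by rw [Matrix.mulVec_transpose]
      _ = wext ⬝ᵥ (H *ᵥ v) := (Matrix.dotProduct_mulVec wext H v).symm
      _ = wext ⬝ᵥ (μ • v) := by rw [hvEq]
      _ = μ * (wext ⬝ᵥ v) := by rw [dotProduct_smul]; rfl
  have hdot2 : (H.mulVec wext) ⬝ᵥ v = μ * (wext ⬝ᵥ v) + c * v n := by
    calc (H.mulVec wext) ⬝ᵥ v
        = ∑ i, (μ * wext i + (if i = n then c else 0)) * v i :=
          Finset.sum_congr rfl fun i _ => by rw [hkey i]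
      _ = ∑ i, (μ * (wext i * v i) + (if i = n then c * v i else 0)) :=
          Finset.sum_congr rfl fun i _ => by split_ifs <;> ring
      _ = μ * (∑ i, wext i * v i) + c * v n := by
          rw [Finset.sum_add_distrib, ← Finset.mul_sum,
            Finset.sum_ite_eq' Finset.univ n (fun i => c * v i), if_pos (Finset.mem_univ n)]
      _ = μ * (wext ⬝ᵥ v) + c * v n := rfl
  have h0 : c * v n = 0 := by
    have := hdot1.symm.trans hdot2
    linarith
  exact (mul_eq_zero.mp h0).resolve_left hc

/-- If `v` is a `μ`-eigenvector of a Jacobi matrix `H` with `v n = 0`, then its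
restrictions to the two principal blocks are eigenvectors (possibly zero). -/
lemma jac_restrict {N : ℕ} (H : Matrix (Fin N) (Fin N) ℝ) (n : Fin N)
    (hband : ∀ i j : Fin N, (i : ℕ) + 1 < (j : ℕ) → H i j = 0)
    (hband' : ∀ i j : Fin N, (j : ℕ) + 1 < (i : ℕ) → H i j = 0)
    (μ : ℝ) (v : Fin N → ℝ) (hvEq : H.mulVec v = μ • v) (hvn : v n = 0) :
    ((Jminus H n).mulVec (fun i : Fin (n : ℕ) => v ⟨↑i, lt_of_lt_of_le i.isLt n.isLt.le⟩)
        = μ • (fun i : Fin (n : ℕ) => v ⟨↑i, lt_of_lt_of_le i.isLt n.isLt.le⟩)) ∧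
    ((Jplus H n).mulVec (fun i : Fin (N - (n : ℕ) - 1) =>
          v ⟨(n : ℕ) + 1 + ↑i, by have := i.isLt; omega⟩)
        = μ • (fun i : Fin (N - (n : ℕ) - 1) =>
          v ⟨(n : ℕ) + 1 + ↑i, by have := i.isLt; omega⟩)) := by
  constructor
  · funext i
    have pfi : (↑i : ℕ) < N := lt_of_lt_of_le i.isLt n.isLt.le
    have hf : ∀ j : Fin N, (n : ℕ) ≤ ↑j → H ⟨↑i, pfi⟩ j * v j = 0 := by
      intro j hj
      rcases eq_or_lt_of_le hj with h | h
      · have hjn : j = n := Fin.ext h.symm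
        rw [hjn, hvn, mul_zero]
      · rw [hband ⟨↑i, pfi⟩ j (by simp; omega), zero_mul]
    have e1 := jac_sum_fin_lt (n : ℕ) n.isLt.le (fun j => H ⟨↑i, pfi⟩ j * v j) hf
    calc ((Jminus H n).mulVec (fun i : Fin (n : ℕ) => v ⟨↑i, lt_of_lt_of_le i.isLt n.isLt.le⟩)) i
        = ∑ j : Fin N, H ⟨↑i, pfi⟩ j * v j := e1.symm
      _ = (H.mulVec v) ⟨↑i, pfi⟩ := rfl
      _ = μ * v ⟨↑i, pfi⟩ := by rw [hvEq]; rfl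
      _ = (μ • (fun i : Fin (n : ℕ) => v ⟨↑i, lt_of_lt_of_le i.isLt n.isLt.le⟩)) i := rfl
  · funext i
    have pfi : (n : ℕ) + 1 + ↑i < N := by have := i.isLt; omega
    have hf : ∀ j : Fin N, (↑j : ℕ) < (n : ℕ) + 1 → H ⟨(n : ℕ) + 1 + ↑i, pfi⟩ j * v j = 0 := by
      intro j hj
      rcases Nat.lt_or_ge (↑j : ℕ) (n : ℕ) with h | h
      · rw [hband' ⟨(n : ℕ) + 1 + ↑i, pfi⟩ j (by simp; omega), zero_mul]
      · have hjn : j = n := Fin.ext (by omega)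
        rw [hjn, hvn, mul_zero]
    have e1 := jac_sum_fin_ge ((n : ℕ) + 1) n.isLt (fun j => H ⟨(n : ℕ) + 1 + ↑i, pfi⟩ j * v j) hf
    calc ((Jplus H n).mulVec (fun i : Fin (N - (n : ℕ) - 1) =>
          v ⟨(n : ℕ) + 1 + ↑i, by have := i.isLt; omega⟩)) i
        = ∑ j : Fin N, H ⟨(n : ℕ) + 1 + ↑i, pfi⟩ j * v j := e1.symm
      _ = (H.mulVec v) ⟨(n : ℕ) + 1 + ↑i, pfi⟩ := rfl
      _ = μ * v ⟨(n : ℕ) + 1 + ↑i, pfi⟩ := by rw [hvEq]; rfl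
      _ = (μ • (fun i : Fin (N - (n : ℕ) - 1) =>
            v ⟨(n : ℕ) + 1 + ↑i, by have := i.isLt; omega⟩)) i := rfl

/-- If σ(H₋) ∩ σ(H₊) = ∅ then no eigenvalue of H₋ or H₊ is an eigenvalue
of H: the fraction g(z,n) is in lowest terms. -/
theorem jacobi_disjoint_no_common_root {N : ℕ} (H : Matrix (Fin N) (Fin N) ℝ)
    (n : Fin N) (hH : IsJacobi H)
    (hdisj : Disjoint (spectrum ℝ (Jminus H n)) (spectrum ℝ (Jplus H n))) :
    ∀ μ : ℝ, (μ ∈ spectrum ℝ (Jminus H n) ∨ μ ∈ spectrum ℝ (Jplus H n)) →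
      μ ∉ spectrum ℝ H := by
  obtain ⟨hsymmIs, hband, hpos⟩ := hH
  have hsymm : ∀ i j : Fin N, H j i = H i j := fun i j => hsymmIs.apply i j
  have hband' : ∀ i j : Fin N, (j : ℕ) + 1 < (i : ℕ) → H i j = 0 :=
    fun i j h => (hsymm j i).trans (hband j i h)
  have hm_symm : ∀ i j : Fin (n : ℕ), (Jminus H n) j i = (Jminus H n) i j :=
    fun i j => hsymm _ _
  have hm_band : ∀ i j : Fin (n : ℕ), (i : ℕ) + 1 < (j : ℕ) → (Jminus H n) i j = 0 :=
    fun i j h => hband _ _ h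
  have hm_pos : ∀ i j : Fin (n : ℕ), (j : ℕ) = (i : ℕ) + 1 → 0 < (Jminus H n) i j :=
    fun i j h => hpos _ _ h
  have hp_symm : ∀ i j : Fin (N - (n : ℕ) - 1), (Jplus H n) j i = (Jplus H n) i j :=
    fun i j => hsymm _ _
  have hp_band : ∀ i j : Fin (N - (n : ℕ) - 1), (i : ℕ) + 1 < (j : ℕ) → (Jplus H n) i j = 0 :=
    fun i j h => hband _ _ (show (n : ℕ) + 1 + ↑i + 1 < (n : ℕ) + 1 + ↑j by omega)
  have hp_pos : ∀ i j : Fin (N - (n : ℕ) - 1), (j : ℕ) = (i : ℕ) + 1 → 0 < (Jplus H n) i j :=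
    fun i j h => hpos _ _ (show (n : ℕ) + 1 + ↑j = (n : ℕ) + 1 + ↑i + 1 by omega)
  have hnle : (n : ℕ) ≤ N := n.isLt.le
  intro μ hμ hμH
  obtain ⟨v, hv0, hvEq⟩ := (jac_mem_spectrum_iff H μ).mp hμH
  rcases hμ with hμm | hμp
  · -- μ is an eigenvalue of H₋
    obtain ⟨w, hw0, hwEq⟩ := (jac_mem_spectrum_iff _ μ).mp hμm
    have hn0 : 0 < (n : ℕ) := by
      rcases Nat.eq_zero_or_pos (n : ℕ) with h | h
      · exact absurd (funext fun i : Fin (n : ℕ) => absurd i.isLt (by omega)) hw0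
      · exact h
    have hn1N : (n : ℕ) - 1 < N := by omega
    have hn1n : (n : ℕ) - 1 < (n : ℕ) := Nat.sub_lt hn0 one_pos
    have hwlast : w ⟨(n : ℕ) - 1, hn1n⟩ ≠ 0 := fun h =>
      hw0 (jac_tri_zero_of_last _ hm_symm hm_band hm_pos μ w hwEq hn0 h)
    set wext : Fin N → ℝ := fun i => if h : (i : ℕ) < (n : ℕ) then w ⟨i, h⟩ else 0
      with hwextdef
    have hwext_zero : ∀ j : Fin N, (n : ℕ) ≤ (j : ℕ) → wext j = 0 :=
      fun j hj => dif_neg (by omega)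
    have hkey : ∀ i : Fin N, (H.mulVec wext) i = μ * wext i +
        (if i = n then H n ⟨(n : ℕ) - 1, hn1N⟩ * w ⟨(n : ℕ) - 1, hn1n⟩ else 0) := by
      intro i
      have e1 : (H.mulVec wext) i
          = ∑ j : Fin (n : ℕ), H i ⟨↑j, lt_of_lt_of_le j.isLt hnle⟩ * w j := by
        rw [jac_mulVec_apply,
          jac_sum_fin_lt (n : ℕ) hnle (fun j => H i j * wext j)
            (fun j hj => by show H i j * wext j = 0; rw [hwext_zero j hj, mul_zero])]
        refine Finset.sum_congr rfl fun j _ => ?_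
        congr 1
        rw [hwextdef]
        exact dif_pos j.isLt
      rcases lt_trichotomy ((i : ℕ)) ((n : ℕ)) with hi | hi | hi
      · have e2 : ∑ j : Fin (n : ℕ), H i ⟨↑j, lt_of_lt_of_le j.isLt hnle⟩ * w j
            = ((Jminus H n).mulVec w) ⟨(i : ℕ), hi⟩ :=
          Finset.sum_congr rfl fun j _ => rfl
        have e3 : ((Jminus H n).mulVec w) ⟨(i : ℕ), hi⟩ = μ * w ⟨(i : ℕ), hi⟩ := by
          rw [hwEq]; rfl
        have e4 : wext i = w ⟨(i : ℕ), hi⟩ := by rw [hwextdef]; exact dif_pos hi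
        rw [e1, e2, e3, e4, if_neg (fun hh => absurd (congrArg Fin.val hh) (by omega : ¬((i:ℕ) = (n:ℕ)))), add_zero]
      · have hin : i = n := Fin.ext hi
        subst hin
        have e2 : ∑ j : Fin (i : ℕ), H i ⟨↑j, lt_of_lt_of_le j.isLt hnle⟩ * w j
            = H i ⟨(i : ℕ) - 1, hn1N⟩ * w ⟨(i : ℕ) - 1, hn1n⟩ := by
          refine Finset.sum_eq_single (⟨(i : ℕ) - 1, hn1n⟩ : Fin (i : ℕ)) ?_ ?_
          · intro j _ hj
            have hjlt : (j : ℕ) < (i : ℕ) - 1 := by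
              have h2 := j.isLt
              rcases Nat.lt_or_ge (j : ℕ) ((i : ℕ) - 1) with h | h
              · exact h
              · exact absurd (Fin.ext (by simp; omega)) hj
            rw [hband' i ⟨↑j, lt_of_lt_of_le j.isLt hnle⟩ (by simp; omega), zero_mul]
          · intro h; exact absurd (Finset.mem_univ _) h
        have e4 : wext i = 0 := hwext_zero i (le_refl _)
        rw [e1, e2, e4, mul_zero, zero_add, if_pos rfl]
      · have e2 : ∑ j : Fin (n : ℕ), H i ⟨↑j, lt_of_lt_of_le j.isLt hnle⟩ * w j = 0 :=
          Finset.sum_eq_zero fun j _ => by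
            rw [hband' i ⟨↑j, lt_of_lt_of_le j.isLt hnle⟩ (by simp; omega), zero_mul]
        have e4 : wext i = 0 := hwext_zero i (by omega)
        rw [e1, e2, e4, mul_zero, zero_add,
          if_neg (fun hh => absurd (congrArg Fin.val hh) (by omega : ¬((i : ℕ) = (n : ℕ))))]
    have hHn1pos : 0 < H n ⟨(n : ℕ) - 1, hn1N⟩ := by
      rw [hsymm ⟨(n : ℕ) - 1, hn1N⟩ n]
      exact hpos ⟨(n : ℕ) - 1, hn1N⟩ n (show (n : ℕ) = (n : ℕ) - 1 + 1 by omega)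
    have hvn : v n = 0 :=
      jac_dot_trick H hsymmIs n μ _ v wext hvEq hkey
        (mul_ne_zero (ne_of_gt hHn1pos) hwlast)
    obtain ⟨hminusEq, hplusEq⟩ := jac_restrict H n hband hband' μ v hvEq hvn
    have hvplus : (fun i : Fin (N - (n : ℕ) - 1) =>
        v ⟨(n : ℕ) + 1 + ↑i, by have := i.isLt; omega⟩) = 0 := by
      by_contra h
      exact Set.disjoint_left.mp hdisj hμm ((jac_mem_spectrum_iff _ μ).mpr ⟨_, h, hplusEq⟩)
    have hvgt : ∀ j : Fin N, (n : ℕ) < ↑j → v j = 0 := by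
      intro j hj
      have hlt : (j : ℕ) - (n : ℕ) - 1 < N - (n : ℕ) - 1 := by have := j.isLt; omega
      have hje : j = (⟨(n : ℕ) + 1 + ((j : ℕ) - (n : ℕ) - 1), by have := j.isLt; omega⟩ : Fin N) :=
        Fin.ext (by simp; omega)
      rw [hje]
      exact congrFun hvplus ⟨(j : ℕ) - (n : ℕ) - 1, hlt⟩
    have hvminus : (fun i : Fin (n : ℕ) => v ⟨↑i, lt_of_lt_of_le i.isLt n.isLt.le⟩) ≠ 0 := by
      intro h
      apply hv0
      funext j
      rcases lt_trichotomy ((j : ℕ)) ((n : ℕ)) with hj | hj | hj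
      · exact congrFun h ⟨↑j, hj⟩
      · have : j = n := Fin.ext hj
        rw [this]; exact hvn
      · exact hvgt j hj
    have hvlast : v ⟨(n : ℕ) - 1, hn1N⟩ ≠ 0 := fun h =>
      hvminus (jac_tri_zero_of_last _ hm_symm hm_band hm_pos μ _ hminusEq hn0 h)
    have hrow : ∑ j : Fin N, H n j * v j = 0 := by
      have : (H.mulVec v) n = μ * v n := by rw [hvEq]; rfl
      rw [hvn, mul_zero] at this
      exact this
    have hsingle : ∑ j : Fin N, H n j * v j = H n ⟨(n : ℕ) - 1, hn1N⟩ * v ⟨(n : ℕ) - 1, hn1N⟩ := by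
      refine Finset.sum_eq_single _ ?_ ?_
      · intro j _ hj
        rcases lt_trichotomy ((j : ℕ)) ((n : ℕ)) with h | h | h
        · rcases Nat.lt_or_ge (j : ℕ) ((n : ℕ) - 1) with h2 | h2
          · rw [hband' n j (by omega), zero_mul]
          · exact absurd (Fin.ext (by simp; omega)) hj
        · have : j = n := Fin.ext h
          rw [this, hvn, mul_zero]
        · rw [hvgt j h, mul_zero]
      · intro h; exact absurd (Finset.mem_univ _) h
    have hzero : H n ⟨(n : ℕ) - 1, hn1N⟩ * v ⟨(n : ℕ) - 1, hn1N⟩ = 0 := hsingle ▸ hrow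
    rcases mul_eq_zero.mp hzero with h | h
    · exact (ne_of_gt hHn1pos) h
    · exact hvlast h
  · -- μ is an eigenvalue of H₊
    obtain ⟨w, hw0, hwEq⟩ := (jac_mem_spectrum_iff _ μ).mp hμp
    have hP0 : 0 < N - (n : ℕ) - 1 := by
      rcases Nat.eq_zero_or_pos (N - (n : ℕ) - 1) with h | h
      · exact absurd (funext fun i : Fin (N - (n : ℕ) - 1) => absurd i.isLt (by omega)) hw0
      · exact h
    have hn1N : (n : ℕ) + 1 < N := by have := n.isLt; omega
    have hwfirst : w ⟨0, hP0⟩ ≠ 0 := fun h =>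
      hw0 (jac_tri_zero_of_first _ hp_symm hp_band hp_pos μ w hwEq hP0 h)
    set wext : Fin N → ℝ := fun i =>
        if h : (n : ℕ) < (i : ℕ) then w ⟨(i : ℕ) - (n : ℕ) - 1, by have := i.isLt; omega⟩ else 0
      with hwextdef
    have hwext_zero : ∀ j : Fin N, (j : ℕ) ≤ (n : ℕ) → wext j = 0 :=
      fun j hj => dif_neg (by omega)
    have hkey : ∀ i : Fin N, (H.mulVec wext) i = μ * wext i +
        (if i = n then H n ⟨(n : ℕ) + 1, hn1N⟩ * w ⟨0, hP0⟩ else 0) := by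
      intro i
      have e1 : (H.mulVec wext) i
          = ∑ j : Fin (N - ((n : ℕ) + 1)),
              H i ⟨(n : ℕ) + 1 + ↑j, by have := j.isLt; omega⟩ * w j := by
        rw [jac_mulVec_apply,
          jac_sum_fin_ge ((n : ℕ) + 1) n.isLt (fun j => H i j * wext j)
            (fun j hj => by show H i j * wext j = 0; rw [hwext_zero j (by omega), mul_zero])]
        refine Finset.sum_congr rfl fun j _ => ?_
        congr 1
        simp only [hwextdef]
        rw [dif_pos (show (n : ℕ) < (n : ℕ) + 1 + ↑j by omega)]
        congr 1
        exact Fin.ext (by simp; omega)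
      rcases lt_trichotomy ((i : ℕ)) ((n : ℕ)) with hi | hi | hi
      · have e2 : ∑ j : Fin (N - ((n : ℕ) + 1)),
            H i ⟨(n : ℕ) + 1 + ↑j, by have := j.isLt; omega⟩ * w j = 0 :=
          Finset.sum_eq_zero fun j _ => by
            rw [hband i ⟨(n : ℕ) + 1 + ↑j, by have := j.isLt; omega⟩ (by simp; omega), zero_mul]
        have e4 : wext i = 0 := hwext_zero i (by omega)
        rw [e1, e2, e4, mul_zero, zero_add,
          if_neg (fun hh => absurd (congrArg Fin.val hh) (by omega : ¬((i : ℕ) = (n : ℕ))))]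
      · have hin : i = n := Fin.ext hi
        subst hin
        have e2 : ∑ j : Fin (N - ((i : ℕ) + 1)),
            H i ⟨(i : ℕ) + 1 + ↑j, by have := j.isLt; omega⟩ * w j
            = H i ⟨(i : ℕ) + 1, hn1N⟩ * w ⟨0, hP0⟩ := by
          refine Finset.sum_eq_single (⟨0, hP0⟩ : Fin (N - ((i : ℕ) + 1))) ?_ ?_
          · intro j _ hj
            have hj0 : 0 < (j : ℕ) := by
              rcases Nat.eq_zero_or_pos (j : ℕ) with h | h
              · exact absurd (Fin.ext (by simp [h])) hj
              · exact h
            rw [hband i ⟨(i : ℕ) + 1 + ↑j, by have := j.isLt; omega⟩ (by simp; omega), zero_mul]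
          · intro h; exact absurd (Finset.mem_univ _) h
        have e4 : wext i = 0 := hwext_zero i (le_refl _)
        rw [e1, e2, e4, mul_zero, zero_add, if_pos rfl]
      · have hi' : (i : ℕ) - (n : ℕ) - 1 < N - (n : ℕ) - 1 := by have := i.isLt; omega
        have e2 : ∑ j : Fin (N - ((n : ℕ) + 1)),
            H i ⟨(n : ℕ) + 1 + ↑j, by have := j.isLt; omega⟩ * w j
            = ((Jplus H n).mulVec w) ⟨(i : ℕ) - (n : ℕ) - 1, hi'⟩ := by
          refine Finset.sum_congr rfl fun j _ => ?_
          have hie : i = (⟨(n : ℕ) + 1 + ((i : ℕ) - (n : ℕ) - 1), by have := i.isLt; omega⟩ : Fin N) :=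
            Fin.ext (by simp; omega)
          exact congrArg
            (fun x : Fin N => H x ⟨(n : ℕ) + 1 + ↑j, by have := j.isLt; omega⟩ * w j) hie
        have e3 : ((Jplus H n).mulVec w) ⟨(i : ℕ) - (n : ℕ) - 1, hi'⟩
            = μ * w ⟨(i : ℕ) - (n : ℕ) - 1, hi'⟩ := by
          rw [hwEq]; rfl
        have e4 : wext i = w ⟨(i : ℕ) - (n : ℕ) - 1, hi'⟩ := by
          rw [hwextdef]; exact dif_pos hi
        rw [e1, e2, e3, e4,
          if_neg (fun hh => absurd (congrArg Fin.val hh) (by omega)), add_zero]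
    have hHn1pos : 0 < H n ⟨(n : ℕ) + 1, hn1N⟩ :=
      hpos n ⟨(n : ℕ) + 1, hn1N⟩ (show (n : ℕ) + 1 = (n : ℕ) + 1 by rfl)
    have hvn : v n = 0 :=
      jac_dot_trick H hsymmIs n μ _ v wext hvEq hkey
        (mul_ne_zero (ne_of_gt hHn1pos) hwfirst)
    obtain ⟨hminusEq, hplusEq⟩ := jac_restrict H n hband hband' μ v hvEq hvn
    have hvminus : (fun i : Fin (n : ℕ) => v ⟨↑i, lt_of_lt_of_le i.isLt n.isLt.le⟩) = 0 := by
      by_contra h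
      exact Set.disjoint_right.mp hdisj hμp ((jac_mem_spectrum_iff _ μ).mpr ⟨_, h, hminusEq⟩)
    have hvlt : ∀ j : Fin N, (j : ℕ) < (n : ℕ) → v j = 0 := by
      intro j hj
      have := congrFun hvminus ⟨(j : ℕ), hj⟩
      exact this
    have hvplus : (fun i : Fin (N - (n : ℕ) - 1) =>
        v ⟨(n : ℕ) + 1 + ↑i, by have := i.isLt; omega⟩) ≠ 0 := by
      intro h
      apply hv0
      funext j
      rcases lt_trichotomy ((j : ℕ)) ((n : ℕ)) with hj | hj | hj
      · exact hvlt j hj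
      · have : j = n := Fin.ext hj
        rw [this]; exact hvn
      · have hlt : (j : ℕ) - (n : ℕ) - 1 < N - (n : ℕ) - 1 := by have := j.isLt; omega
        have hje : j = (⟨(n : ℕ) + 1 + ((j : ℕ) - (n : ℕ) - 1), by have := j.isLt; omega⟩ : Fin N) :=
          Fin.ext (by simp; omega)
        rw [hje]
        exact congrFun h ⟨(j : ℕ) - (n : ℕ) - 1, hlt⟩
    have hvfirst : v ⟨(n : ℕ) + 1, hn1N⟩ ≠ 0 := fun h =>
      hvplus (jac_tri_zero_of_first _ hp_symm hp_band hp_pos μ _ hplusEq hP0 h)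
    have hrow : ∑ j : Fin N, H n j * v j = 0 := by
      have : (H.mulVec v) n = μ * v n := by rw [hvEq]; rfl
      rw [hvn, mul_zero] at this
      exact this
    have hsingle : ∑ j : Fin N, H n j * v j
        = H n ⟨(n : ℕ) + 1, hn1N⟩ * v ⟨(n : ℕ) + 1, hn1N⟩ := by
      refine Finset.sum_eq_single _ ?_ ?_
      · intro j _ hj
        rcases lt_trichotomy ((j : ℕ)) ((n : ℕ)) with h | h | h
        · rw [hvlt j h, mul_zero]
        · have : j = n := Fin.ext h
          rw [this, hvn, mul_zero]
        · rcases Nat.lt_or_ge ((n : ℕ) + 1) (j : ℕ) with h2 | h2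
          · rw [hband n j (by omega), zero_mul]
          · exact absurd (Fin.ext (by simp; omega)) hj
      · intro h; exact absurd (Finset.mem_univ _) h
    have hzero : H n ⟨(n : ℕ) + 1, hn1N⟩ * v ⟨(n : ℕ) + 1, hn1N⟩ = 0 := hsingle ▸ hrow
    rcases mul_eq_zero.mp hzero with h | h
    · exact (ne_of_gt hHn1pos) h
    · exact hvfirst h
end

section
/- Let H be an N×N Jacobi matrix with positive off-diagonals, and let H_+ be the (N−1)×(N−1) matrix obtained by deleting the first row and column (Hochstadt's setting, n = 1). If H' is another Jacobi matrix with positive off-diagonals such that σ(H') = σ(H) and σ(H'_+) = σ(H_+), then H' = H. -/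
open Matrix Polynomial BigOperators

/-! Since the off-diagonal entries are positive, the eigenvalue equation can be solved row by row,
so an eigenvector of a Jacobi matrix is determined by its first coordinate. Hence every eigenvalue
is simple and the spectrum determines the characteristic polynomial. Expanding the determinant
along the first row gives `χ H = (X - a₀) χ H₊ - b₀² χ H₊₊`; as `χ H₊₊` has smaller degree than the
monic `χ H₊`, the pair `(χ H, χ H₊)` determines `a₀`, `b₀` and `χ H₊₊`, and induction on the size
finishes the proof. -/

namespace Polynomial

variable {R : Type*} [CommRing R] [IsDomain R]

theorem eq_of_monic_of_splits_of_nodup_roots {p q : R[X]} (hp : p.Monic) (hq : q.Monic)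
    (hps : p.Splits) (hqs : q.Splits) (hpn : p.roots.Nodup) (hqn : q.roots.Nodup)
    (h : ∀ x, p.IsRoot x ↔ q.IsRoot x) : p = q := by
  have hroots : p.roots = q.roots := (Multiset.Nodup.ext hpn hqn).mpr fun x => by
    rw [mem_roots hp.ne_zero, mem_roots hq.ne_zero, h]
  rw [hps.eq_prod_roots_of_monic hp, hqs.eq_prod_roots_of_monic hq, hroots]

theorem eq_of_three_term_eq {q r r' : R[X]} {a a' c c' : R} {m : ℕ}
    (hq : q.Monic) (hqdeg : q.natDegree = m + 1) (hr : r.Monic) (hrdeg : r.natDegree = m)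
    (hr' : r'.Monic) (hr'deg : r'.natDegree = m)
    (h : (X - C a) * q - C c * r = (X - C a') * q - C c' * r') :
    a = a' ∧ c = c' ∧ (c ≠ 0 → r = r') := by
  have hq1 : q.coeff (m + 1) = 1 := hqdeg ▸ hq.coeff_natDegree
  have hr0 : r.coeff (m + 1) = 0 := coeff_eq_zero_of_natDegree_lt (by omega)
  have hr'0 : r'.coeff (m + 1) = 0 := coeff_eq_zero_of_natDegree_lt (by omega)
  have ha : a = a' := by
    simpa [sub_mul, coeff_X_mul, hq1, hr0, hr'0] using congrArg (coeff · (m + 1)) h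
  subst ha
  have hcr : C c * r = C c' * r' := sub_right_injective h
  have hc : c = c' := by
    simpa [hrdeg ▸ hr.coeff_natDegree, hr'deg ▸ hr'.coeff_natDegree] using
      congrArg (coeff · m) hcr
  subst hc
  exact ⟨rfl, rfl, fun hc => mul_left_cancel₀ (C_ne_zero.mpr hc) hcr⟩

end Polynomial

namespace Matrix

abbrev truncation {R : Type*} {n : ℕ} (M : Matrix (Fin (n + 1)) (Fin (n + 1)) R) :
    Matrix (Fin n) (Fin n) R :=
  M.submatrix Fin.succ Fin.succ

variable {R : Type*} [CommRing R] {n : ℕ}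

theorem charmatrix_truncation (M : Matrix (Fin (n + 1)) (Fin (n + 1)) R) :
    charmatrix M.truncation = (charmatrix M).truncation := by
  ext i j
  rcases eq_or_ne i j with rfl | hij
  · simp
  · simp [charmatrix_apply_ne _ _ _ hij,
      charmatrix_apply_ne _ _ _ ((Fin.succ_injective _).ne hij)]

theorem det_three_term_recurrence (M : Matrix (Fin (n + 2)) (Fin (n + 2)) R)
    (hrow : ∀ j : Fin n, M 0 j.succ.succ = 0) (hcol : ∀ i : Fin n, M i.succ.succ 0 = 0) :
    M.det = M 0 0 * M.truncation.det - M 0 1 * M 1 0 * M.truncation.truncation.det := by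
  have hminor : (M.submatrix Fin.succ (Fin.succAbove 1)).det =
      M 1 0 * M.truncation.truncation.det := by
    rw [det_succ_column_zero, Fin.sum_univ_succ]
    simp [hcol, Function.comp_def]
  rw [det_succ_row_zero, Fin.sum_univ_succ, Fin.sum_univ_succ]
  simp [hrow, hminor, sub_eq_add_neg, mul_assoc]

end Matrix

theorem Jplus_zero_eq_truncation {n : ℕ} (M : Matrix (Fin (n + 1)) (Fin (n + 1)) ℝ)
    (h : 0 < n + 1) : Jplus M ⟨0, h⟩ = M.truncation := by
  ext i j
  simp only [Jplus, submatrix_apply, zero_add, add_comm 1]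
  rfl

namespace IsJacobi

variable {n : ℕ}

theorem isHermitian {N : ℕ} {H : Matrix (Fin N) (Fin N) ℝ} (hH : IsJacobi H) : H.IsHermitian :=
  isHermitian_iff_isSymm.mpr hH.1

theorem truncation {H : Matrix (Fin (n + 1)) (Fin (n + 1)) ℝ} (hH : IsJacobi H) :
    IsJacobi H.truncation := by
  obtain ⟨hsymm, hzero, hpos⟩ := hH
  refine ⟨hsymm.submatrix _, fun i j hij => hzero _ _ ?_, fun i j hij => hpos _ _ ?_⟩ <;>
    simpa using hij

theorem charpoly_three_term_recurrence {H : Matrix (Fin (n + 2)) (Fin (n + 2)) ℝ}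
    (hH : IsJacobi H) :
    H.charpoly = (X - C (H 0 0)) * H.truncation.charpoly -
      C (H 0 1 ^ 2) * H.truncation.truncation.charpoly := by
  have hrow (j : Fin n) : H 0 j.succ.succ = 0 := hH.2.1 _ _ (by simp)
  have hcol (i : Fin n) : H i.succ.succ 0 = 0 := by rw [hH.1.apply]; exact hrow i
  rw [charpoly, det_three_term_recurrence _ (fun j => ?_) (fun i => ?_), charpoly, charpoly,
    charmatrix_truncation, charmatrix_truncation, charmatrix_truncation]
  · have h10 : H 1 0 = H 0 1 := hH.1.apply 0 1
    rw [charmatrix_apply_eq, charmatrix_apply_ne _ _ _ zero_ne_one,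
      charmatrix_apply_ne _ _ _ one_ne_zero, h10, map_pow]
    ring
  · rw [charmatrix_apply_ne _ _ _ (Fin.succ_ne_zero _).symm, hrow, map_zero, neg_zero]
  · rw [charmatrix_apply_ne _ _ _ (Fin.succ_ne_zero _), hcol, map_zero, neg_zero]

theorem eq_zero_of_mulVec_eq_smul {H : Matrix (Fin (n + 1)) (Fin (n + 1)) ℝ} (hH : IsJacobi H)
    {μ : ℝ} {v : Fin (n + 1) → ℝ} (hv : H *ᵥ v = μ • v) (hv0 : v 0 = 0) : v = 0 := by
  suffices ∀ k (hk : k < n + 1), v ⟨k, hk⟩ = 0 from funext fun i => this i i.isLt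
  intro k
  induction k using Nat.strong_induction_on with
  | _ k ih =>
  intro hk
  rcases k with _ | m
  · exact hv0
  have hm : m < n + 1 := by omega
  have hrow : H ⟨m, hm⟩ ⟨m + 1, hk⟩ * v ⟨m + 1, hk⟩ = (μ • v) ⟨m, hm⟩ := by
    rw [← hv, mulVec, dotProduct, Fintype.sum_eq_single ⟨m + 1, hk⟩]
    intro j hj
    rcases lt_trichotomy (j : ℕ) (m + 1) with hlt | heq | hgt
    · rw [ih j hlt j.isLt, mul_zero]
    · exact absurd (Fin.ext heq) hj
    · rw [hH.2.1 _ j hgt, zero_mul]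
  rw [Pi.smul_apply, ih m (by omega) hm, smul_zero] at hrow
  exact (mul_eq_zero.mp hrow).resolve_left (hH.2.2 _ _ rfl).ne'

theorem injective_eigenvalues {H : Matrix (Fin (n + 1)) (Fin (n + 1)) ℝ} (hH : IsJacobi H) :
    Function.Injective hH.isHermitian.eigenvalues := by
  intro i j hij
  by_contra hne
  set b := hH.isHermitian.eigenvectorBasis
  have hb (k : Fin (n + 1)) : H *ᵥ ⇑(b k) = hH.isHermitian.eigenvalues k • ⇑(b k) :=
    hH.isHermitian.mulVec_eigenvectorBasis k
  have hcomb : b j 0 • b i - b i 0 • b j = 0 := by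
    refine WithLp.ofLp_injective 2
      (hH.eq_zero_of_mulVec_eq_smul (μ := hH.isHermitian.eigenvalues i) ?_ ?_)
    · simp only [WithLp.ofLp_sub, WithLp.ofLp_smul, mulVec_sub, mulVec_smul, hb, hij]
      module
    · simp [mul_comm]
  have hj0 : b j 0 = 0 := by
    simpa [inner_sub_right, inner_smul_right, b.orthonormal.inner_eq_zero hne] using
      congrArg (inner ℝ (b i)) hcomb
  exact b.orthonormal.ne_zero j
    (WithLp.ofLp_injective 2 (hH.eq_zero_of_mulVec_eq_smul (hb j) hj0))

theorem nodup_roots_charpoly {N : ℕ} {H : Matrix (Fin N) (Fin N) ℝ} (hH : IsJacobi H) :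
    H.charpoly.roots.Nodup := by
  cases N with
  | zero => simp [charpoly_isEmpty]
  | succ n =>
    rw [hH.isHermitian.roots_charpoly_eq_eigenvalues]
    exact Finset.univ.nodup.map (by simpa using hH.injective_eigenvalues)

theorem charpoly_eq_of_spectrum_eq {N : ℕ} {H H' : Matrix (Fin N) (Fin N) ℝ} (hH : IsJacobi H)
    (hH' : IsJacobi H') (h : spectrum ℝ H = spectrum ℝ H') : H.charpoly = H'.charpoly :=
  eq_of_monic_of_splits_of_nodup_roots (charpoly_monic H) (charpoly_monic H')
    hH.isHermitian.splits_charpoly hH'.isHermitian.splits_charpoly hH.nodup_roots_charpoly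
    hH'.nodup_roots_charpoly fun x => by
      rw [← mem_spectrum_iff_isRoot_charpoly, ← mem_spectrum_iff_isRoot_charpoly, h]

theorem ext_of_truncation {H H' : Matrix (Fin (n + 2)) (Fin (n + 2)) ℝ} (hH : IsJacobi H)
    (hH' : IsJacobi H') (h00 : H 0 0 = H' 0 0) (h01 : H 0 1 = H' 0 1)
    (htr : H.truncation = H'.truncation) : H = H' := by
  have hrow (j : Fin (n + 2)) : H 0 j = H' 0 j := by
    refine Fin.cases h00 (fun j => Fin.cases h01 (fun k => ?_) j) j
    rw [hH.2.1 _ _ (by simp), hH'.2.1 _ _ (by simp)]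
  ext i j
  refine Fin.cases (hrow j) (fun i => Fin.cases ?_ (fun j => congrFun₂ htr i j) j) i
  rw [hH.1.apply, hH'.1.apply]
  exact hrow _

theorem eq_of_charpoly_eq : ∀ {n : ℕ} {H H' : Matrix (Fin (n + 1)) (Fin (n + 1)) ℝ},
    IsJacobi H → IsJacobi H' → H.charpoly = H'.charpoly →
      H.truncation.charpoly = H'.truncation.charpoly → H = H'
  | 0, H, H', _, _, h, _ => by
    have htrace := (trace_eq_neg_charpoly_coeff H).trans
      ((congrArg (fun p => -p.coeff 0) h).trans (trace_eq_neg_charpoly_coeff H').symm)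
    ext i j
    fin_cases i; fin_cases j
    simpa [trace_fin_one] using htrace
  | n + 1, H, H', hH, hH', h, htr => by
    rw [hH.charpoly_three_term_recurrence, hH'.charpoly_three_term_recurrence, htr] at h
    have hdeg {k : ℕ} (M : Matrix (Fin k) (Fin k) ℝ) : M.charpoly.natDegree = k := by
      rw [charpoly_natDegree_eq_dim, Fintype.card_fin]
    obtain ⟨h00, hsq, hrest⟩ := eq_of_three_term_eq (charpoly_monic _) (hdeg _)
      (charpoly_monic _) (hdeg _) (charpoly_monic _) (hdeg _) h
    have h01 : H 0 1 = H' 0 1 :=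
      (sq_eq_sq₀ (hH.2.2 0 1 rfl).le (hH'.2.2 0 1 rfl).le).mp hsq
    have hpos : H 0 1 ^ 2 ≠ 0 := pow_ne_zero 2 (hH.2.2 0 1 rfl).ne'
    exact hH.ext_of_truncation hH' h00 h01
      (eq_of_charpoly_eq hH.truncation hH'.truncation htr (hrest hpos))

end IsJacobi

/-- Hochstadt's theorem (n = 1): a Jacobi matrix is uniquely determined by its
spectrum together with the spectrum of the matrix obtained by deleting the
first row and column. -/
theorem hochstadt_uniqueness {N : ℕ} (hN : 0 < N)
    (H H' : Matrix (Fin N) (Fin N) ℝ) (hH : IsJacobi H) (hH' : IsJacobi H')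
    (hfull : spectrum ℝ H = spectrum ℝ H')
    (hplus : spectrum ℝ (Jplus H ⟨0, hN⟩) = spectrum ℝ (Jplus H' ⟨0, hN⟩)) :
    H = H' := by
  obtain ⟨n, rfl⟩ : ∃ n, N = n + 1 := ⟨N - 1, by omega⟩
  rw [Jplus_zero_eq_truncation, Jplus_zero_eq_truncation] at hplus
  exact hH.eq_of_charpoly_eq hH' (hH.charpoly_eq_of_spectrum_eq hH' hfull)
    (hH.truncation.charpoly_eq_of_spectrum_eq hH'.truncation hplus)
end
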